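/- arXiv:2101.11286 — 8 statements merged into one kernel-verified Lean document; each statement's English description precedes it below -/
import Mathlib

section
/- Let f₁, ..., f_m : ℝⁿ → ℝ be measurable functions such that each f_i is periodic with some nonzero invariant vector v_i (f_i(x + v_i) = f_i(x) for all x). If the sum f = f₁ + ⋯ + f_m is Lebesgue integrable on ℝⁿ, then f = 0 almost everywhere. -/
/-!
Induction on the number of summands. If `S = f₁ + ⋯ + f_m` is integrable, then the differences
`x ↦ f_i (x + v₁) - f_i x` (`i ≥ 2`) are again periodic with periods `v_i` and sum to
`S (· + v₁) - S`, which is integrable; by induction this vanishes a.e., so `S` itself is a.e.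
`v₁`-periodic. An integrable function that is a.e. invariant under the infinite group `ℤ v₁` is
a.e. zero: its integral is the sum of infinitely many equal integrals over a fundamental domain,
such as the slab `0 ≤ L x < 1` for a continuous linear functional with `L v₁ = 1`.
-/

open MeasureTheory Filter Set

section Periods

variable {E F : Type*} [AddCommGroup E] [MeasurableSpace E] [MeasurableAdd E]
  {μ : Measure E} [μ.IsAddLeftInvariant]

theorem ae_eq_comp_add_right {f g : E → F} (h : f =ᵐ[μ] g) (a : E) :
    (fun x => f (x + a)) =ᵐ[μ] fun x => g (x + a) :=
  h.comp_tendsto (measurePreserving_add_right μ a).quasiMeasurePreserving.tendsto_ae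

variable (μ) in
def aePeriods (f : E → F) : AddSubgroup E where
  carrier := {w | (fun x => f (x + w)) =ᵐ[μ] f}
  zero_mem' := by simp
  add_mem' {a b} (ha : (fun x => f (x + a)) =ᵐ[μ] f) (hb : (fun x => f (x + b)) =ᵐ[μ] f) := by
    show (fun x => f (x + (a + b))) =ᵐ[μ] f
    simpa only [add_assoc] using (ae_eq_comp_add_right hb a).trans ha
  neg_mem' {a} (ha : (fun x => f (x + a)) =ᵐ[μ] f) := by
    show (fun x => f (x + -a)) =ᵐ[μ] f
    simpa only [neg_add_cancel_right] using (ae_eq_comp_add_right ha (-a)).symm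

end Periods

theorem MeasureTheory.IsAddFundamentalDomain.ae_eq_zero_of_integrable {G α F : Type*}
    [AddGroup G] [Infinite G] [Countable G] [AddAction G α] [MeasurableSpace α]
    [MeasurableConstVAdd G α] [NormedAddCommGroup F] {s : Set α} {μ : Measure α}
    [VAddInvariantMeasure G α μ]
    (hs : IsAddFundamentalDomain G s μ) {f : α → F} (hf : Integrable f μ)
    (hinv : ∀ g : G, (fun x => f (g +ᵥ x)) =ᵐ[μ] f) : f =ᵐ[μ] 0 := by
  have htrans (g : G) : ∫⁻ x in s, ‖f (-g +ᵥ x)‖ₑ ∂μ = ∫⁻ x in s, ‖f x‖ₑ ∂μ :=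
    lintegral_congr_ae <| ae_restrict_of_ae <| (hinv (-g)).mono fun x hx => congrArg enorm hx
  have hsum : ∫⁻ x, ‖f x‖ₑ ∂μ = ∑' _ : G, ∫⁻ x in s, ‖f x‖ₑ ∂μ := by
    rw [hs.lintegral_eq_tsum', tsum_congr htrans]
  have hs_zero : ∫⁻ x in s, ‖f x‖ₑ ∂μ = 0 := by
    by_contra h
    exact hf.2.ne (hsum.trans (ENNReal.tsum_const_eq_top_of_ne_zero h))
  rw [← eLpNorm_eq_zero_iff hf.1 one_ne_zero, eLpNorm_one_eq_lintegral_enorm, hsum, hs_zero,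
    tsum_zero]

section LinearFunctional

variable {E : Type*} [AddCommGroup E] {v : E} (L : E →+ ℝ)

theorem isAddFundamentalDomain_zmultiples_preimage_Ico [MeasurableSpace E] {μ : Measure E}
    (hLv : L v = 1) (hL : Measurable L) :
    IsAddFundamentalDomain (AddSubgroup.zmultiples v) (L ⁻¹' Ico 0 1) μ := by
  have hL_zsmul (k : ℤ) (x : E) : L (k • v + x) = L x + k • 1 := by
    rw [map_add, map_zsmul, hLv, add_comm]
  refine .mk' (hL measurableSet_Ico).nullMeasurableSet fun x => ?_
  obtain ⟨k, hk, hk_unique⟩ := existsUnique_add_zsmul_mem_Ico zero_lt_one (L x) 0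
  refine ⟨⟨k • v, k, rfl⟩, ?_, ?_⟩
  · simpa [AddSubgroup.vadd_def, hL_zsmul] using hk
  · rintro ⟨_, j, rfl⟩ hj
    have := hk_unique j (by simpa [AddSubgroup.vadd_def, hL_zsmul] using hj)
    simp [this]

theorem infinite_zmultiples_of_map_eq_one (hLv : L v = 1) :
    Infinite (AddSubgroup.zmultiples v) :=
  Infinite.of_injective (fun k : ℤ => ⟨k • v, k, rfl⟩) fun j k h => by
    simpa [hLv] using congrArg L (congrArg Subtype.val h)

end LinearFunctional

section PeriodicSums

variable {E F : Type*} [AddCommGroup E] [Module ℝ E] [TopologicalSpace E] [ContinuousAdd E]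
  [SeparatingDual ℝ E] [MeasurableSpace E] [BorelSpace E]
  [NormedAddCommGroup F] {μ : Measure E} [μ.IsAddLeftInvariant]

theorem ae_eq_zero_of_integrable_of_ae_periodic {f : E → F} {v : E} (hf : Integrable f μ)
    (hv : v ≠ 0) (hper : (fun x => f (x + v)) =ᵐ[μ] f) : f =ᵐ[μ] 0 := by
  obtain ⟨L, hLv⟩ := SeparatingDual.exists_eq_one (R := ℝ) hv
  have := infinite_zmultiples_of_map_eq_one (L : E →+ ℝ) hLv
  refine (isAddFundamentalDomain_zmultiples_preimage_Ico (μ := μ) (L : E →+ ℝ) hLv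
    L.continuous.measurable).ae_eq_zero_of_integrable hf fun ⟨w, hw⟩ => ?_
  have : (fun x => f (x + w)) =ᵐ[μ] f :=
    (AddSubgroup.zmultiples_le (H := aePeriods μ f)).mpr hper hw
  simpa only [AddSubgroup.vadd_def, vadd_eq_add, add_comm w] using this

theorem ae_eq_zero_of_integrable_sum_of_periodic {ι : Type*} (s : Finset ι) {f : ι → E → F}
    {v : ι → E} (hv : ∀ i, v i ≠ 0) (hper : ∀ i x, f i (x + v i) = f i x)
    (hint : Integrable (fun x => ∑ i ∈ s, f i x) μ) : (fun x => ∑ i ∈ s, f i x) =ᵐ[μ] 0 := by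
  classical
  induction s using Finset.induction_on generalizing f with
  | empty => exact .of_eq (funext fun _ => Finset.sum_empty)
  | insert a s ha ih =>
    set S : E → F := fun x => ∑ i ∈ insert a s, f i x
    have hdiff (x : E) : ∑ i ∈ s, (f i (x + v a) - f i x) = S (x + v a) - S x := by
      simp only [S, Finset.sum_insert ha, hper a, Finset.sum_sub_distrib]
      abel
    have hdiff_zero : (fun x => S (x + v a) - S x) =ᵐ[μ] 0 := by
      simp only [← hdiff]
      refine ih (fun i x => ?_) ?_
      · rw [add_right_comm, hper, hper]
      · exact ((hint.comp_add_right (v a)).sub hint).congr (.of_eq (funext hdiff).symm)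
    refine ae_eq_zero_of_integrable_of_ae_periodic hint (hv a) ?_
    filter_upwards [hdiff_zero] with x hx
    exact sub_eq_zero.mp hx

end PeriodicSums

theorem stmt_2_general (n m : ℕ) (f : Fin m → (Fin n → ℝ) → ℝ) (v : Fin m → Fin n → ℝ)
    (hv : ∀ i, v i ≠ 0)
    (hper : ∀ i x, f i (x + v i) = f i x)
    (hint : Integrable (fun x => ∑ i, f i x) (volume : Measure (Fin n → ℝ))) :
    (fun x => ∑ i, f i x) =ᵐ[(volume : Measure (Fin n → ℝ))] 0 :=
  ae_eq_zero_of_integrable_sum_of_periodic Finset.univ hv hper hint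

theorem stmt_2 (n m : ℕ) (f : Fin m → (Fin n → ℝ) → ℝ) (v : Fin m → Fin n → ℝ)
    (hmeas : ∀ i, Measurable (f i)) (hv : ∀ i, v i ≠ 0)
    (hper : ∀ i x, f i (x + v i) = f i x)
    (hint : Integrable (fun x => ∑ i, f i x) (volume : Measure (Fin n → ℝ))) :
    (fun x => ∑ i, f i x) =ᵐ[(volume : Measure (Fin n → ℝ))] 0 :=
  stmt_2_general n m f v hv hper hint
end

section
/- Let f₁, ..., f_m : ℝⁿ → ℝ be continuous functions, each periodic with some nonzero invariant vector. If f₁ + ⋯ + f_m is Lebesgue integrable on ℝⁿ, then f₁ + ⋯ + f_m is identically zero. -/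
/-!
Applying the difference operator `Δ_[v] g x = g (x + v) - g x` with `v` the period of the last
summand removes that summand and leaves a sum of fewer continuous periodic functions which is still
integrable; by induction this difference vanishes, so the whole sum is periodic with period `v`.
A continuous integrable function with a nonzero period `v` vanishes: if `‖g‖ ≥ ε > 0` on a ball of
radius at most `‖v‖ / 2`, the same bound holds on its translates by `k • v`, which are pairwise
disjoint, so `∫ ‖g‖ = ∞`.
-/

open MeasureTheory Function Metric fwdDiff ENNReal

section FwdDiff

variable {M G : Type*} [AddCommMonoid M] [AddCommGroup G] {f : M → G} {c : M}

lemma fwdDiff_eq_zero_iff_periodic : Δ_[c] f = 0 ↔ Periodic f c := by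
  simp only [funext_iff, fwdDiff, Pi.zero_apply, sub_eq_zero, Periodic]

lemma Function.Periodic.fwdDiff (hf : Periodic f c) (h : M) : Periodic (Δ_[h] f) c := fun x => by
  simp only [_root_.fwdDiff, add_right_comm x c h, hf (x + h), hf x]

lemma Continuous.fwdDiff [TopologicalSpace M] [ContinuousAdd M] [TopologicalSpace G]
    [IsTopologicalAddGroup G] (hf : Continuous f) (h : M) : Continuous (Δ_[h] f) :=
  (hf.comp (continuous_add_const h)).sub hf

end FwdDiff

lemma MeasureTheory.Integrable.fwdDiff {G F : Type*} [MeasurableSpace G] [AddCommGroup G]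
    [MeasurableAdd G] [NormedAddCommGroup F] {μ : Measure G} [μ.IsAddRightInvariant] {f : G → F}
    (hf : Integrable f μ) (h : G) : Integrable (Δ_[h] f) μ :=
  (hf.comp_add_right h).sub hf

lemma lintegral_eq_top_of_le_setLIntegral {α ι : Type*} [MeasurableSpace α] [Countable ι]
    [Infinite ι] {μ : Measure α} {f : α → ℝ≥0∞} {s : ι → Set α} (hs : ∀ i, MeasurableSet (s i))
    (hd : Pairwise (Disjoint on s)) {a : ℝ≥0∞} (ha : a ≠ 0) (hle : ∀ i, a ≤ ∫⁻ x in s i, f x ∂μ) :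
    ∫⁻ x, f x ∂μ = ∞ :=
  top_le_iff.1 <| calc
    ∞ = ∑' _ : ι, a := (ENNReal.tsum_const_eq_top_of_ne_zero ha).symm
    _ ≤ ∑' i, ∫⁻ x in s i, f x ∂μ := ENNReal.tsum_le_tsum hle
    _ = ∫⁻ x in ⋃ i, s i, f x ∂μ := (lintegral_iUnion hs hd _).symm
    _ ≤ ∫⁻ x, f x ∂μ := setLIntegral_le_lintegral _ _

lemma pairwise_disjoint_ball_add_nsmul {E : Type*} [NormedAddCommGroup E] [NormedSpace ℝ E]
    (x v : E) {r : ℝ} (hr : 2 * r ≤ ‖v‖) :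
    Pairwise (Disjoint on fun k : ℕ => ball (x + k • v) r) := by
  intro j k hjk
  refine ball_disjoint_ball ?_
  have hjk' : (1 : ℤ) ≤ |(j : ℤ) - k| := Int.one_le_abs (sub_ne_zero.2 (Nat.cast_injective.ne hjk))
  calc r + r ≤ 1 * ‖v‖ := by linarith
    _ ≤ |(j : ℝ) - k| * ‖v‖ := by gcongr; exact_mod_cast hjk'
    _ = dist (x + j • v) (x + k • v) := by
      rw [dist_add_left, dist_eq_norm, ← Nat.cast_smul_eq_nsmul ℝ, ← Nat.cast_smul_eq_nsmul ℝ,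
        ← sub_smul, norm_smul, Real.norm_eq_abs]

theorem Function.Periodic.eq_zero_of_integrable {E F : Type*} [NormedAddCommGroup E]
    [NormedSpace ℝ E] [MeasurableSpace E] [BorelSpace E] {μ : Measure E} [μ.IsAddHaarMeasure]
    [NormedAddCommGroup F] {g : E → F} {v : E} (hg : Periodic g v) (hv : v ≠ 0)
    (hc : Continuous g) (hi : Integrable g μ) : g = 0 := by
  funext x₀
  by_contra hx₀
  set ε := ‖g x₀‖ / 2
  have hε : 0 < ε := by positivity
  obtain ⟨δ, hδ, hgδ⟩ := eventually_nhds_iff_ball.1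
    ((hc.norm.tendsto x₀).eventually_const_lt (half_lt_self (norm_pos_iff.2 hx₀)))
  set r := min δ (‖v‖ / 2)
  have hr : 0 < r := lt_min hδ (by positivity [norm_pos_iff.2 hv])
  have hgr : ∀ k : ℕ, ∀ y ∈ ball (x₀ + k • v) r, ENNReal.ofReal ε ≤ ‖g y‖ₑ := fun k y hy => by
    rw [← (hg.nsmul k).sub_eq, ← ofReal_norm]
    refine ENNReal.ofReal_le_ofReal (hgδ _ ?_).le
    rw [mem_ball, dist_sub_eq_dist_add_left]
    exact hy.trans_le (min_le_left _ _)
  refine hi.2.ne (lintegral_eq_top_of_le_setLIntegral (fun _ => measurableSet_ball)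
    (pairwise_disjoint_ball_add_nsmul x₀ v (r := r) (by linarith [min_le_right δ (‖v‖ / 2)]))
    (mul_ne_zero (ENNReal.ofReal_pos.2 hε).ne' (measure_ball_pos μ x₀ hr).ne') fun k => ?_)
  calc ENNReal.ofReal ε * μ (ball x₀ r) = ∫⁻ _ in ball (x₀ + k • v) r, ENNReal.ofReal ε ∂μ := by
        rw [setLIntegral_const, Measure.addHaar_ball_center μ (x₀ + k • v),
          Measure.addHaar_ball_center μ x₀]
    _ ≤ ∫⁻ y in ball (x₀ + k • v) r, ‖g y‖ₑ ∂μ :=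
        setLIntegral_mono hc.enorm.measurable (hgr k)

theorem Finset.sum_eq_zero_of_integrable_of_periodic {ι E F : Type*} [NormedAddCommGroup E]
    [NormedSpace ℝ E] [MeasurableSpace E] [BorelSpace E] {μ : Measure E} [μ.IsAddHaarMeasure]
    [NormedAddCommGroup F] (s : Finset ι) {f : ι → E → F} {v : ι → E}
    (hc : ∀ i, Continuous (f i)) (hv : ∀ i, v i ≠ 0) (hp : ∀ i, Periodic (f i) (v i))
    (hi : Integrable (∑ i ∈ s, f i) μ) : ∑ i ∈ s, f i = 0 := by
  classical
  induction s using Finset.induction_on generalizing f with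
  | empty => rfl
  | insert a s ha ih =>
    have hΔ : Δ_[v a] (∑ i ∈ insert a s, f i) = ∑ i ∈ s, Δ_[v a] (f i) := by
      rw [fwdDiff_finsetSum, Finset.sum_insert ha, fwdDiff_eq_zero_iff_periodic.2 (hp a), zero_add]
    have hs := ih (fun i => (hc i).fwdDiff (v a)) (fun i => (hp i).fwdDiff (v a))
      (hΔ ▸ hi.fwdDiff (v a))
    exact Periodic.eq_zero_of_integrable (fwdDiff_eq_zero_iff_periodic.1 (hΔ.trans hs)) (hv a)
      (Finset.sum_fn _ f ▸ continuous_finsetSum _ fun i _ => hc i) hi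

theorem stmt_3 (n m : ℕ) (f : Fin m → (Fin n → ℝ) → ℝ) (v : Fin m → Fin n → ℝ)
    (hcont : ∀ i, Continuous (f i)) (hv : ∀ i, v i ≠ 0)
    (hper : ∀ i x, f i (x + v i) = f i x)
    (hint : Integrable (fun x => ∑ i, f i x) (volume : Measure (Fin n → ℝ))) :
    ∀ x, ∑ i, f i x = 0 := by
  rw [← Finset.sum_fn] at hint
  intro x
  simpa only [Finset.sum_apply, Pi.zero_apply] using
    congrFun (Finset.univ.sum_eq_zero_of_integrable_of_periodic hcont hv hper hint) x
end

section
/- Let f₁, ..., f_m : ℝⁿ → ℝ be measurable functions, each low-dimensional (each f_i satisfies f_i(x + c·v_i) = f_i(x) for some v_i ≠ 0, all x, all c ∈ ℝ). If f₁ + ⋯ + f_m is Lebesgue integrable on ℝⁿ, then the sum is zero almost everywhere. -/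
open MeasureTheory

/-- A "generic direction" lemma: one can choose coefficients `lam` so that every
nonempty subsum `∑ i ∈ S, lam i • v i` is nonzero. -/
lemma stmt5_generic (n m : ℕ) (v : Fin m → Fin n → ℝ) (hv : ∀ i, v i ≠ 0) :
    ∃ lam : Fin m → ℝ, ∀ S : Finset (Fin m), S.Nonempty → ∑ i ∈ S, lam i • v i ≠ 0 := by
  classical
  set L : Finset (Fin m) → ((Fin m → ℝ) →ₗ[ℝ] (Fin n → ℝ)) := fun S =>
    ∑ i ∈ S, (LinearMap.proj i : (Fin m → ℝ) →ₗ[ℝ] ℝ).smulRight (v i) with hLdef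
  have hL : ∀ (S : Finset (Fin m)) (lam : Fin m → ℝ), L S lam = ∑ i ∈ S, lam i • v i := by
    intro S lam
    simp [hLdef, LinearMap.sum_apply]
  have hker : ∀ S : Finset (Fin m), S.Nonempty →
      (volume : Measure (Fin m → ℝ)) (LinearMap.ker (L S) : Set (Fin m → ℝ)) = 0 := by
    rintro S ⟨j, hj⟩
    apply Measure.addHaar_submodule
    intro htop
    apply hv j
    have hmem : Pi.single j (1 : ℝ) ∈ LinearMap.ker (L S) := by
      rw [htop]; exact Submodule.mem_top
    rw [LinearMap.mem_ker, hL] at hmem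
    have hsum : (∑ i ∈ S, (Pi.single j (1 : ℝ) : Fin m → ℝ) i • v i) = v j := by
      have : ∀ i ∈ S, (Pi.single j (1 : ℝ) : Fin m → ℝ) i • v i = if i = j then v i else 0 := by
        intro i _
        by_cases h : i = j
        · subst h; simp
        · simp [Pi.single_apply, h]
      rw [Finset.sum_congr rfl this, Finset.sum_ite_eq' S j (fun i => v i), if_pos hj]
    rw [hsum] at hmem
    exact hmem
  have hbad : (volume : Measure (Fin m → ℝ))
      (⋃ (S : Finset (Fin m)) (_ : S.Nonempty), (LinearMap.ker (L S) : Set (Fin m → ℝ))) = 0 :=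
    measure_iUnion_null fun S => measure_iUnion_null fun hS => hker S hS
  have huniv : 0 < (volume : Measure (Fin m → ℝ)) Set.univ :=
    isOpen_univ.measure_pos _ ⟨0, trivial⟩
  have hne : (⋃ (S : Finset (Fin m)) (_ : S.Nonempty),
      (LinearMap.ker (L S) : Set (Fin m → ℝ))) ≠ Set.univ := by
    intro h
    rw [h] at hbad
    exact absurd hbad huniv.ne'
  obtain ⟨lam, hlam⟩ : ∃ lam : Fin m → ℝ, lam ∉
      (⋃ (S : Finset (Fin m)) (_ : S.Nonempty), (LinearMap.ker (L S) : Set (Fin m → ℝ))) := by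
    by_contra h
    push_neg at h
    exact hne (Set.eq_univ_of_forall h)
  refine ⟨lam, fun S hS h0 => hlam ?_⟩
  refine Set.mem_iUnion.2 ⟨S, Set.mem_iUnion.2 ⟨hS, ?_⟩⟩
  show lam ∈ LinearMap.ker (L S)
  rw [LinearMap.mem_ker, hL, h0]

theorem stmt_5 (n m : ℕ) (f : Fin m → (Fin n → ℝ) → ℝ) (v : Fin m → Fin n → ℝ)
    (hmeas : ∀ i, Measurable (f i)) (hv : ∀ i, v i ≠ 0)
    (hld : ∀ i x (c : ℝ), f i (x + c • v i) = f i x)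
    (hint : Integrable (fun x => ∑ i, f i x) (volume : Measure (Fin n → ℝ))) :
    (fun x => ∑ i, f i x) =ᵐ[(volume : Measure (Fin n → ℝ))] 0 := by
  classical
  set g : (Fin n → ℝ) → ℝ := fun x => ∑ i, f i x with hgdef
  -- Key combinatorial identity: applying all difference operators kills g.
  have key : ∀ (x : Fin n → ℝ) (c : Fin m → ℝ),
      ∑ S ∈ (Finset.univ : Finset (Fin m)).powerset,
        (-1 : ℝ) ^ S.card * g (x + ∑ i ∈ S, c i • v i) = 0 := by
    intro x c
    have hgs : ∀ S : Finset (Fin m),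
        g (x + ∑ i ∈ S, c i • v i) = ∑ j, f j (x + ∑ i ∈ S, c i • v i) := fun _ => rfl
    simp only [hgs, Finset.mul_sum]
    rw [Finset.sum_comm]
    refine Finset.sum_eq_zero fun j _ => ?_
    have hins : (Finset.univ : Finset (Fin m)) = insert j (Finset.univ.erase j) :=
      (Finset.insert_erase (Finset.mem_univ j)).symm
    rw [hins, Finset.sum_powerset_insert (Finset.notMem_erase j _), ← Finset.sum_add_distrib]
    refine Finset.sum_eq_zero fun t ht => ?_
    have hjt : j ∉ t := fun h => Finset.notMem_erase j _ (Finset.mem_powerset.1 ht h)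
    have h1 : x + ∑ i ∈ insert j t, c i • v i = (x + ∑ i ∈ t, c i • v i) + c j • v j := by
      rw [Finset.sum_insert hjt]; abel
    rw [h1, hld j _ (c j), Finset.card_insert_of_notMem hjt, pow_succ]
    ring
  obtain ⟨lam, hlam⟩ := stmt5_generic n m v hv
  have htrans : ∀ w : Fin n → ℝ, Integrable (fun y => g (w + y)) volume := fun w =>
    hint.comp_add_left w
  have habs : Integrable (fun y => |g y|) volume := hint.abs
  -- cover of the space by closed balls
  have hcover : (⋃ k : ℕ, Metric.closedBall (0 : Fin n → ℝ) (k : ℝ)) = Set.univ := by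
    ext y
    simp only [Set.mem_iUnion, Metric.mem_closedBall, Set.mem_univ, iff_true]
    obtain ⟨k, hk⟩ := exists_nat_ge (dist y 0)
    exact ⟨k, hk⟩
  have hmonoball : Monotone fun k : ℕ => Metric.closedBall (0 : Fin n → ℝ) (k : ℝ) :=
    fun a b hab => Metric.closedBall_subset_closedBall (by exact_mod_cast hab)
  -- tail integrals of |g| tend to zero
  have tailtendsto : Filter.Tendsto
      (fun k : ℕ => ∫ y in Metric.closedBall (0 : Fin n → ℝ) (k : ℝ), |g y|)
      Filter.atTop (nhds (∫ y, |g y|)) := by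
    have h := tendsto_setIntegral_of_monotone
      (fun k : ℕ => measurableSet_closedBall) hmonoball habs.integrableOn
    rwa [hcover, Measure.restrict_univ] at h
  have tail : ∀ ε > (0 : ℝ), ∃ N : ℕ, ∀ r : ℝ, (N : ℝ) ≤ r →
      ∫ y in (Metric.closedBall (0 : Fin n → ℝ) r)ᶜ, |g y| < ε := by
    intro ε hε
    have hcompl : ∀ k : ℕ, ∫ y in (Metric.closedBall (0 : Fin n → ℝ) (k : ℝ))ᶜ, |g y|
        = (∫ y, |g y|) - ∫ y in Metric.closedBall (0 : Fin n → ℝ) (k : ℝ), |g y| := by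
      intro k
      rw [← integral_add_compl (measurableSet_closedBall
        (x := (0 : Fin n → ℝ)) (ε := (k : ℝ))) habs]
      ring
    have h2 : Filter.Tendsto
        (fun k : ℕ => ∫ y in (Metric.closedBall (0 : Fin n → ℝ) (k : ℝ))ᶜ, |g y|)
        Filter.atTop (nhds 0) := by
      simp only [hcompl]
      simpa using (tendsto_const_nhds (x := ∫ y, |g y|)).sub tailtendsto
    obtain ⟨N, hN⟩ := Filter.eventually_atTop.1 (h2.eventually_lt_const hε)
    refine ⟨N, fun r hr => ?_⟩
    calc ∫ y in (Metric.closedBall (0 : Fin n → ℝ) r)ᶜ, |g y|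
        ≤ ∫ y in (Metric.closedBall (0 : Fin n → ℝ) (N : ℝ))ᶜ, |g y| := by
          refine setIntegral_mono_set habs.integrableOn
            (Filter.Eventually.of_forall fun y => abs_nonneg _) ?_
          exact Filter.Eventually.of_forall fun y hy =>
            fun hy' => hy (Metric.closedBall_subset_closedBall hr hy')
      _ < ε := hN N le_rfl
  -- integral of g over any bounded measurable set vanishes
  have hbdd : ∀ s : Set (Fin n → ℝ), MeasurableSet s → Bornology.IsBounded s →
      ∫ y in s, g y = 0 := by
    intro s hsm hsb
    obtain ⟨R, hR⟩ := hsb.subset_closedBall 0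
    set H : (Fin n → ℝ) → ℝ := fun w => ∫ y in s, g (w + y) with hHdef
    -- decay of H at infinity
    have hHbound : ∀ w : Fin n → ℝ,
        |H w| ≤ ∫ y in (Metric.closedBall (0 : Fin n → ℝ) (‖w‖ - R - 1))ᶜ, |g y| := by
      intro w
      have h1 : |H w| ≤ ∫ y in s, |g (w + y)| := by
        simpa [Real.norm_eq_abs] using
          norm_integral_le_integral_norm (μ := volume.restrict s) (f := fun y => g (w + y))
      refine h1.trans ?_
      have hsub : s ⊆ (fun y => w + y) ⁻¹'
          (Metric.closedBall (0 : Fin n → ℝ) (‖w‖ - R - 1))ᶜ := by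
        intro y hy
        have hyR : ‖y‖ ≤ R := by
          have := hR hy
          simpa [Metric.mem_closedBall, dist_eq_norm] using this
        have hlow : ‖w‖ - R ≤ ‖w + y‖ := by
          have : ‖w‖ ≤ ‖w + y‖ + ‖y‖ := by
            calc ‖w‖ = ‖w + y - y‖ := by rw [add_sub_cancel_right]
              _ ≤ ‖w + y‖ + ‖y‖ := norm_sub_le _ _
          linarith
        simp only [Set.mem_preimage, Set.mem_compl_iff, Metric.mem_closedBall, dist_eq_norm,
          sub_zero, not_le]
        linarith
      have hpre : ∫ y in (fun y => w + y) ⁻¹'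
            (Metric.closedBall (0 : Fin n → ℝ) (‖w‖ - R - 1))ᶜ, |g (w + y)|
          = ∫ y in (Metric.closedBall (0 : Fin n → ℝ) (‖w‖ - R - 1))ᶜ, |g y| := by
        exact (measurePreserving_add_left volume w).setIntegral_preimage_emb
          (MeasurableEquiv.addLeft w).measurableEmbedding (fun y => |g y|) _
      rw [← hpre]
      refine setIntegral_mono_set ((htrans w).abs.integrableOn)
        (Filter.Eventually.of_forall fun y => abs_nonneg _)
        (Filter.Eventually.of_forall fun y hy => hsub hy)
    -- integrated key identity
    have keyH : ∀ c : Fin m → ℝ,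
        ∑ S ∈ (Finset.univ : Finset (Fin m)).powerset,
          (-1 : ℝ) ^ S.card * H (∑ i ∈ S, c i • v i) = 0 := by
      intro c
      have hintS : ∀ S ∈ (Finset.univ : Finset (Fin m)).powerset,
          IntegrableOn (fun y => (-1 : ℝ) ^ S.card * g ((∑ i ∈ S, c i • v i) + y)) s volume :=
        fun S _ => ((htrans _).integrableOn).const_mul _
      have hpt : ∀ y : Fin n → ℝ, ∑ S ∈ (Finset.univ : Finset (Fin m)).powerset,
          (-1 : ℝ) ^ S.card * g ((∑ i ∈ S, c i • v i) + y) = 0 := by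
        intro y
        rw [← key y c]
        exact Finset.sum_congr rfl fun S _ => by rw [add_comm]
      calc ∑ S ∈ (Finset.univ : Finset (Fin m)).powerset,
            (-1 : ℝ) ^ S.card * H (∑ i ∈ S, c i • v i)
          = ∑ S ∈ (Finset.univ : Finset (Fin m)).powerset,
              ∫ y in s, (-1 : ℝ) ^ S.card * g ((∑ i ∈ S, c i • v i) + y) := by
            exact Finset.sum_congr rfl fun S _ => (integral_const_mul _ _).symm
        _ = ∫ y in s, ∑ S ∈ (Finset.univ : Finset (Fin m)).powerset,
              (-1 : ℝ) ^ S.card * g ((∑ i ∈ S, c i • v i) + y) :=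
            (integral_finset_sum _ hintS).symm
        _ = 0 := by
            rw [integral_congr_ae (Filter.Eventually.of_forall fun y => hpt y)]
            simp
    -- the identity along the generic ray
    have hsum0 : ∀ k : ℕ, ∑ S ∈ (Finset.univ : Finset (Fin m)).powerset,
        (-1 : ℝ) ^ S.card * H ((k : ℝ) • ∑ i ∈ S, lam i • v i) = 0 := by
      intro k
      have harg : ∀ S : Finset (Fin m),
          (∑ i ∈ S, ((k : ℝ) * lam i) • v i) = (k : ℝ) • ∑ i ∈ S, lam i • v i := by
        intro S
        rw [Finset.smul_sum]
        exact Finset.sum_congr rfl fun i _ => (smul_smul _ _ _).symm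
      have := keyH fun i => (k : ℝ) * lam i
      simpa only [harg] using this
    -- each nonempty-S term tends to 0
    have hterm : ∀ S ∈ (Finset.univ : Finset (Fin m)).powerset,
        Filter.Tendsto (fun k : ℕ => (-1 : ℝ) ^ S.card * H ((k : ℝ) • ∑ i ∈ S, lam i • v i))
          Filter.atTop (nhds (if S = ∅ then H 0 else 0)) := by
      intro S _
      rcases eq_or_ne S (∅ : Finset (Fin m)) with rfl | hS
      · simp only [if_pos rfl, Finset.card_empty, pow_zero, one_mul, Finset.sum_empty, smul_zero]
        exact tendsto_const_nhds
      · rw [if_neg hS]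
        have hu : (∑ i ∈ S, lam i • v i) ≠ 0 := hlam S (Finset.nonempty_iff_ne_empty.2 hS)
        have hnorm : 0 < ‖∑ i ∈ S, lam i • v i‖ := norm_pos_iff.2 hu
        have hH0 : Filter.Tendsto (fun k : ℕ => H ((k : ℝ) • ∑ i ∈ S, lam i • v i))
            Filter.atTop (nhds 0) := by
          rw [Metric.tendsto_atTop]
          intro ε hε
          obtain ⟨N, hN⟩ := tail ε hε
          obtain ⟨K, hK⟩ := exists_nat_ge (((N : ℝ) + R + 1) / ‖∑ i ∈ S, lam i • v i‖)
          refine ⟨K, fun k hk => ?_⟩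
          rw [Real.dist_eq, sub_zero]
          have hkK : ((N : ℝ) + R + 1) / ‖∑ i ∈ S, lam i • v i‖ ≤ (k : ℝ) :=
            hK.trans (by exact_mod_cast hk)
          have hkb : (N : ℝ) + R + 1 ≤ (k : ℝ) * ‖∑ i ∈ S, lam i • v i‖ :=
            (div_le_iff₀ hnorm).1 hkK
          have hns : ‖(k : ℝ) • ∑ i ∈ S, lam i • v i‖ = (k : ℝ) * ‖∑ i ∈ S, lam i • v i‖ := by
            rw [norm_smul, Real.norm_natCast]
          have hr : (N : ℝ) ≤ ‖(k : ℝ) • ∑ i ∈ S, lam i • v i‖ - R - 1 := by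
            rw [hns]; linarith
          exact (hHbound _).trans_lt (hN _ hr)
        simpa using hH0.const_mul ((-1 : ℝ) ^ S.card)
    have hlim := tendsto_finset_sum (Finset.univ : Finset (Fin m)).powerset hterm
    have h0 : (∑ S ∈ (Finset.univ : Finset (Fin m)).powerset,
        if S = (∅ : Finset (Fin m)) then H 0 else 0) = H 0 := by
      rw [Finset.sum_ite_eq' (Finset.univ : Finset (Fin m)).powerset (∅ : Finset (Fin m))
        (fun _ => H 0)]
      simp
    have hH00 : H 0 = 0 := by
      have h2 : Filter.Tendsto (fun _ : ℕ => (0 : ℝ)) Filter.atTop (nhds (H 0)) := by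
        rw [← h0]
        simpa only [hsum0] using hlim
      exact (tendsto_nhds_unique h2 tendsto_const_nhds)
    simpa [hHdef] using hH00
  -- extend to all finite-measure sets
  have hfin : ∀ s : Set (Fin n → ℝ), MeasurableSet s →
      (volume : Measure (Fin n → ℝ)) s < ⊤ → ∫ y in s, g y = 0 := by
    intro s hsm _
    have hmono := tendsto_setIntegral_of_monotone
      (s := fun k : ℕ => s ∩ Metric.closedBall (0 : Fin n → ℝ) (k : ℝ))
      (fun k => hsm.inter measurableSet_closedBall)
      (fun a b hab => Set.inter_subset_inter_right _ (hmonoball hab))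
      (hint.integrableOn)
    have hU : (⋃ k : ℕ, s ∩ Metric.closedBall (0 : Fin n → ℝ) (k : ℝ)) = s := by
      rw [← Set.inter_iUnion, hcover, Set.inter_univ]
    rw [hU] at hmono
    have hz : ∀ k : ℕ, ∫ y in s ∩ Metric.closedBall (0 : Fin n → ℝ) (k : ℝ), g y = 0 := fun k =>
      hbdd _ (hsm.inter measurableSet_closedBall)
        (Metric.isBounded_closedBall.subset Set.inter_subset_right)
    have : Filter.Tendsto (fun _ : ℕ => (0 : ℝ)) Filter.atTop (nhds (∫ y in s, g y)) := by
      simpa only [hz] using hmono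
    exact (tendsto_nhds_unique this tendsto_const_nhds)
  exact hint.ae_eq_zero_of_forall_setIntegral_eq_zero hfin
end

section
/- For n ≥ 2, the function g(x) = max(0, 1 − ‖x‖_∞) on ℝⁿ cannot be written as a finite sum Σᵢ εᵢ · max{w_{i,1}ᵀx + b_{i,1}, ..., w_{i,n-1}ᵀx + b_{i,n-1}} where εᵢ ∈ {−1, 1}, each maximum is over at most n−1 affine functions, with w_{i,j} ∈ ℝⁿ, b_{i,j} ∈ ℝ. -/
open MeasureTheory

/-- A nonzero-period periodic function vanishing outside a ball is identically zero. -/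
lemma aux_periodic_eq_zero {n : ℕ} (f : (Fin n → ℝ) → ℝ) (v : Fin n → ℝ) (hv : v ≠ 0)
    (hp : ∀ x, f (x + v) = f x) (R : ℝ) (hR : ∀ x, R ≤ ‖x‖ → f x = 0) :
    ∀ x, f x = 0 := by
  intro x
  have hiter : ∀ k : ℕ, f (x + k • v) = f x := by
    intro k
    induction k with
    | zero => simp
    | succ k ih => rw [succ_nsmul, ← add_assoc, hp, ih]
  have hvpos : 0 < ‖v‖ := norm_pos_iff.mpr hv
  obtain ⟨k, hk⟩ := exists_nat_ge ((R + ‖x‖) / ‖v‖)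
  have hk' : R + ‖x‖ ≤ k * ‖v‖ := (div_le_iff₀ hvpos).mp hk
  have hsm : (k : ℕ) • v = (k : ℝ) • v := (Nat.cast_smul_eq_nsmul ℝ k v).symm
  have hnorm : R ≤ ‖x + (k : ℕ) • v‖ := by
    have h1 : ‖(k : ℝ) • v‖ - ‖x‖ ≤ ‖x + (k : ℝ) • v‖ := by
      have h := norm_sub_norm_le ((k : ℝ) • v) (-x)
      simp only [norm_neg, sub_neg_eq_add] at h
      calc ‖(k : ℝ) • v‖ - ‖x‖ ≤ ‖(k : ℝ) • v + x‖ := by linarith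
        _ = ‖x + (k : ℝ) • v‖ := by rw [add_comm]
    have h2 : ‖(k : ℝ) • v‖ = k * ‖v‖ := by
      rw [norm_smul]; simp
    rw [hsm]
    nlinarith [norm_nonneg x]
  rw [← hiter k]
  exact hR _ hnorm

/-- A finite sum of (nonzero-)periodic functions that vanishes outside a ball
vanishes identically. -/
lemma aux_sum_periodic {n : ℕ} : ∀ (m : ℕ) (F : Fin m → (Fin n → ℝ) → ℝ)
    (v : Fin m → (Fin n → ℝ)), (∀ i, v i ≠ 0) → (∀ i x, F i (x + v i) = F i x) →
    (∃ R : ℝ, ∀ x, R ≤ ‖x‖ → (∑ i, F i x) = 0) → ∀ x, (∑ i, F i x) = 0 := by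
  intro m
  induction m with
  | zero => intro F v _ _ _ x; simp
  | succ m ih =>
    rintro F v hv hp ⟨R, hR⟩
    have hsub := ih (fun i y => F i.castSucc (y + v (Fin.last m)) - F i.castSucc y)
      (fun i => v i.castSucc) (fun i => hv _)
      (by
        intro i y
        show F i.castSucc (y + v i.castSucc + v (Fin.last m))
            - F i.castSucc (y + v i.castSucc)
            = F i.castSucc (y + v (Fin.last m)) - F i.castSucc y
        have e : y + v i.castSucc + v (Fin.last m)
            = y + v (Fin.last m) + v i.castSucc := by abel
        rw [e, hp i.castSucc (y + v (Fin.last m)), hp i.castSucc y])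
      (by
        refine ⟨R + ‖v (Fin.last m)‖, fun y hy => ?_⟩
        have hy1 : R ≤ ‖y‖ := by
          have := norm_nonneg (v (Fin.last m)); linarith
        have hy2 : R ≤ ‖y + v (Fin.last m)‖ := by
          have h := norm_sub_norm_le y (-(v (Fin.last m)))
          simp only [norm_neg, sub_neg_eq_add] at h
          linarith
        have s1 := hR _ hy2
        have s2 := hR _ hy1
        rw [Fin.sum_univ_castSucc] at s1 s2
        have hlast := hp (Fin.last m) y
        rw [Finset.sum_sub_distrib]
        rw [hlast] at s1
        linarith)
    have hper : ∀ y, (∑ i, F i (y + v (Fin.last m))) = ∑ i, F i y := by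
      intro y
      have hy := hsub y
      rw [Finset.sum_sub_distrib] at hy
      rw [Fin.sum_univ_castSucc (f := fun i => F i (y + v (Fin.last m))),
        Fin.sum_univ_castSucc (f := fun i => F i y), hp (Fin.last m) y]
      linarith
    exact aux_periodic_eq_zero (fun y => ∑ i, F i y) (v (Fin.last m)) (hv _) hper R hR

theorem stmt_8 (n : ℕ) (hn : 2 ≤ n) :
    ¬ ∃ (m : ℕ) (ε : Fin m → ℝ) (k : Fin m → ℕ)
      (w : (i : Fin m) → Fin (k i) → Fin n → ℝ) (b : (i : Fin m) → Fin (k i) → ℝ),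
      (∀ i, ε i = 1 ∨ ε i = -1) ∧ (∀ i, 0 < k i ∧ k i ≤ n - 1) ∧
      (∀ x : Fin n → ℝ,
        max 0 (1 - ‖x‖) = ∑ i, ε i * ⨆ j : Fin (k i), (∑ l, w i j l * x l + b i j)) := by
  rintro ⟨m, ε, k, w, b, hε, hk, heq⟩
  -- For each i, find a nonzero v i annihilated by all w i j
  have hvex : ∀ i : Fin m, ∃ v : Fin n → ℝ, v ≠ 0 ∧ ∀ j, ∑ l, w i j l * v l = 0 := by
    intro i
    have hkn : k i < n := lt_of_le_of_lt (hk i).2 (Nat.sub_lt (by omega) one_pos)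
    let φ : (Fin n → ℝ) →ₗ[ℝ] (Fin (k i) → ℝ) := (Matrix.of (w i)).mulVecLin
    have hker : LinearMap.ker φ ≠ ⊥ := by
      apply LinearMap.ker_ne_bot_of_finrank_lt
      rw [Module.finrank_fin_fun, Module.finrank_fin_fun]
      exact hkn
    obtain ⟨v, hv, hv0⟩ := Submodule.exists_mem_ne_zero_of_ne_bot hker
    refine ⟨v, hv0, fun j => ?_⟩
    have hφ : φ v = 0 := hv
    have := congrFun hφ j
    simpa [φ, Matrix.mulVecLin, Matrix.mulVec, dotProduct, mul_comm] using this
  choose v hv0 hvw using hvex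
  set F : Fin m → (Fin n → ℝ) → ℝ :=
    fun i x => ε i * ⨆ j : Fin (k i), (∑ l, w i j l * x l + b i j) with hF
  have hper : ∀ i x, F i (x + v i) = F i x := by
    intro i x
    have hj : ∀ j : Fin (k i), (∑ l, w i j l * (x + v i) l + b i j)
        = ∑ l, w i j l * x l + b i j := by
      intro j
      have h : ∑ l, w i j l * (x l + v i l) = ∑ l, w i j l * x l + ∑ l, w i j l * v i l := by
        rw [← Finset.sum_add_distrib]
        exact Finset.sum_congr rfl (fun l _ => by ring)
      simp only [Pi.add_apply]
      rw [h, hvw i j]; ring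
    simp only [hF]
    congr 1
    exact congrArg _ (funext hj)
  have hzero : ∃ R : ℝ, ∀ x, R ≤ ‖x‖ → (∑ i, F i x) = 0 := by
    refine ⟨1, fun x hx => ?_⟩
    rw [(heq x).symm]
    exact max_eq_left (by linarith)
  have hall := aux_sum_periodic m F v hv0 hper hzero
  have h0 : (0 : ℝ) ⊔ (1 - ‖(0 : Fin n → ℝ)‖) = 0 := by
    rw [heq 0]; exact hall 0
  simp at h0
end

section
/- For n ≥ 2, any one-hidden-layer neural network g(x) = Σᵢ aᵢ σ(wᵢᵀx + bᵢ) with wᵢ ∈ ℝⁿ, aᵢ, bᵢ ∈ ℝ and σ : ℝ → ℝ any measurable function, is a finite sum of low-dimensional functions, and hence if g is Lebesgue integrable on ℝⁿ, then g = 0 almost everywhere. -/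
open MeasureTheory

private lemma sum_mul_single {n : ℕ} (w : Fin n → ℝ) (k : Fin n) (a : ℝ) :
    ∑ j, w j * (Pi.single k a : Fin n → ℝ) j = w k * a := by
  rw [Finset.sum_eq_single k]
  · simp
  · intro j _ hj; simp [Pi.single_eq_of_ne hj]
  · intro h; exact absurd (Finset.mem_univ k) h

private lemma orth_exists {n : ℕ} (hn : 2 ≤ n) (wi : Fin n → ℝ) :
    ∃ v : Fin n → ℝ, v ≠ 0 ∧ ∑ j, wi j * v j = 0 := by
  have h0 : (0 : ℕ) < n := by omega
  have h1 : (1 : ℕ) < n := by omega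
  set i0 : Fin n := ⟨0, h0⟩ with hi0
  set i1 : Fin n := ⟨1, h1⟩ with hi1
  have hne : i1 ≠ i0 := by simp [hi0, hi1, Fin.ext_iff]
  by_cases hw : wi i0 = 0 ∧ wi i1 = 0
  · refine ⟨Pi.single i0 1, ?_, ?_⟩
    · intro h
      have := congrFun h i0
      simp at this
    · rw [sum_mul_single, hw.1, zero_mul]
  · refine ⟨Pi.single i0 (wi i1) - Pi.single i1 (wi i0), ?_, ?_⟩
    · intro h
      rcases Classical.em (wi i0 = 0) with h0' | h0'
      · have h1' : wi i1 ≠ 0 := fun h1' => hw ⟨h0', h1'⟩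
        have := congrFun h i0
        simp [Pi.single_eq_of_ne hne, Pi.single_eq_of_ne hne.symm] at this
        exact h1' this
      · have := congrFun h i1
        simp [Pi.single_eq_of_ne hne, Pi.single_eq_of_ne hne.symm] at this
        exact h0' this
    · simp only [Pi.sub_apply, mul_sub, Finset.sum_sub_distrib, sum_mul_single]
      ring

private lemma translate_sum {n : ℕ} (wi v : Fin n → ℝ) (horth : ∑ j, wi j * v j = 0)
    (x : Fin n → ℝ) (c : ℝ) :
    ∑ j, wi j * (x + c • v) j = ∑ j, wi j * x j := by
  simp only [Pi.add_apply, Pi.smul_apply, smul_eq_mul, mul_add, Finset.sum_add_distrib]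
  have : ∑ j, wi j * (c * v j) = c * ∑ j, wi j * v j := by
    rw [Finset.mul_sum]; exact Finset.sum_congr rfl fun j _ => by ring
  rw [this, horth, mul_zero, add_zero]

open Metric in
private lemma lemA {n : ℕ} (g : (Fin n → ℝ) → ℝ) (v : Fin n → ℝ) (hv : v ≠ 0)
    (hg : Integrable g (volume : Measure (Fin n → ℝ)))
    (hinv : ∀ t : ℝ, (fun x => g (x + t • v)) =ᵐ[(volume : Measure (Fin n → ℝ))] g) :
    g =ᵐ[(volume : Measure (Fin n → ℝ))] 0 := by
  have hvn : 0 < ‖v‖ := norm_pos_iff.mpr hv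
  have habs : Integrable (fun x => |g x|) (volume : Measure (Fin n → ℝ)) := hg.abs
  have key : ∀ R : ℕ, ∫ x in closedBall (0 : Fin n → ℝ) (R : ℝ), |g x| = 0 := by
    intro R
    set c := ∫ x in closedBall (0 : Fin n → ℝ) (R : ℝ), |g x| with hc
    have hc0 : 0 ≤ c :=
      setIntegral_nonneg measurableSet_closedBall (fun x _ => abs_nonneg _)
    set T : ℝ := (2 * (R : ℝ) + 1) / ‖v‖ with hT
    set u : ℕ → (Fin n → ℝ) := fun k => ((k : ℝ) * T) • v with hu
    set s : ℕ → Set (Fin n → ℝ) := fun k => closedBall (u k) (R : ℝ) with hs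
    have hTv : T * ‖v‖ = 2 * (R : ℝ) + 1 := div_mul_cancel₀ _ (ne_of_gt hvn)
    have hint : ∀ k : ℕ, ∫ x in s k, |g x| = c := by
      intro k
      have hmp := measurePreserving_add_right (volume : Measure (Fin n → ℝ)) (u k)
      have hemb := (MeasurableEquiv.addRight (u k)).measurableEmbedding
      have hpre : (fun x => x + u k) ⁻¹' (s k) = closedBall (0 : Fin n → ℝ) (R : ℝ) := by
        ext x
        simp [hs, Set.mem_preimage, mem_closedBall, dist_eq_norm]
      have h1 := hmp.setIntegral_preimage_emb hemb (fun x => |g x|) (s k)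
      rw [hpre] at h1
      rw [← h1, hc]
      refine setIntegral_congr_ae measurableSet_closedBall ?_
      filter_upwards [hinv ((k : ℝ) * T)] with x hx _
      rw [show x + u k = x + ((k : ℝ) * T) • v from rfl, hx]
    have hdisj : ∀ k l : ℕ, k ≠ l → Disjoint (s k) (s l) := by
      intro k l hkl
      refine Metric.closedBall_disjoint_closedBall ?_
      have hdist : dist (u k) (u l) = |(k : ℝ) - (l : ℝ)| * (T * ‖v‖) := by
        rw [dist_eq_norm, hu]
        simp only
        rw [← sub_smul, norm_smul, Real.norm_eq_abs, ← sub_mul, abs_mul,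
          abs_of_pos (by positivity : (0:ℝ) < T)]
        ring
      rw [hdist, hTv]
      have h1le : (1 : ℝ) ≤ |(k : ℝ) - (l : ℝ)| := by
        have hzz : ((k : ℤ)) ≠ (l : ℤ) := by exact_mod_cast hkl
        have hz : (1 : ℤ) ≤ |(k : ℤ) - (l : ℤ)| := Int.one_le_abs (sub_ne_zero.mpr hzz)
        have hz' : ((1 : ℤ) : ℝ) ≤ |((k : ℤ) : ℝ) - ((l : ℤ) : ℝ)| := by
          exact_mod_cast hz
        push_cast at hz'
        exact hz'
      nlinarith [Nat.cast_nonneg (α := ℝ) R]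
    have hNle : ∀ N : ℕ, (N : ℝ) * c ≤ ∫ x, |g x| := by
      intro N
      have hsum : ∫ x in ⋃ k ∈ Finset.range N, s k, |g x| =
          ∑ k ∈ Finset.range N, ∫ x in s k, |g x| :=
        integral_biUnion_finset (Finset.range N) (fun k _ => measurableSet_closedBall)
          (fun k _ l _ hkl => hdisj k l hkl)
          (fun k _ => habs.integrableOn)
      have : ∑ k ∈ Finset.range N, ∫ x in s k, |g x| = (N : ℝ) * c := by
        simp [hint, Finset.sum_const, Finset.card_range, nsmul_eq_mul]
      rw [← this, ← hsum]
      exact setIntegral_le_integral habs (Filter.Eventually.of_forall fun x => abs_nonneg _)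
    by_contra hcne
    have hcpos : 0 < c := lt_of_le_of_ne hc0 (Ne.symm hcne)
    obtain ⟨N, hN⟩ := exists_nat_gt ((∫ x, |g x|) / c)
    have := hNle N
    rw [div_lt_iff₀ hcpos] at hN
    linarith
  have hres : ∀ R : ℕ, g =ᵐ[volume.restrict (closedBall (0 : Fin n → ℝ) (R : ℝ))] 0 := by
    intro R
    have h0 : (fun x => |g x|) =ᵐ[volume.restrict (closedBall (0 : Fin n → ℝ) (R : ℝ))] 0 :=
      (integral_eq_zero_iff_of_nonneg (fun x => abs_nonneg _) habs.integrableOn).mp (key R)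
    filter_upwards [h0] with x hx
    exact abs_eq_zero.mp hx
  have hU : g =ᵐ[volume.restrict (⋃ R : ℕ, closedBall (0 : Fin n → ℝ) (R : ℝ))] 0 := by
    rw [Filter.EventuallyEq, ae_restrict_iUnion_eq, Filter.eventually_iSup]
    exact fun R => hres R
  rwa [Metric.iUnion_closedBall_nat, Measure.restrict_univ] at hU

private lemma lemB {n : ℕ} : ∀ (m : ℕ) (f : Fin m → ((Fin n → ℝ) → ℝ))
    (v : Fin m → (Fin n → ℝ)),
    (∀ i, v i ≠ 0) → (∀ (i : Fin m) (x : Fin n → ℝ) (c : ℝ), f i (x + c • v i) = f i x) →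
    Integrable (fun x => ∑ i, f i x) (volume : Measure (Fin n → ℝ)) →
    (fun x => ∑ i, f i x) =ᵐ[(volume : Measure (Fin n → ℝ))] 0 := by
  intro m
  induction m with
  | zero =>
    intro f v _ _ _
    simp only [Finset.univ_eq_empty, Finset.sum_empty]
    exact Filter.Eventually.of_forall (fun x => rfl)
  | succ m ih =>
    intro f v hv hinvf hint
    have hshift : ∀ t : ℝ, (fun x => (∑ i, f i (x + t • v 0))) =ᵐ[(volume : Measure (Fin n → ℝ))]
        (fun x => ∑ i, f i x) := by
      intro t
      have heq : ∀ x, (∑ i : Fin m, (f i.succ (x + t • v 0) - f i.succ x)) =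
          (∑ i, f i (x + t • v 0)) - (∑ i, f i x) := by
        intro x
        rw [Finset.sum_sub_distrib, Fin.sum_univ_succ (fun i => f i (x + t • v 0)),
          Fin.sum_univ_succ (fun i => f i x), hinvf 0 x t]
        ring
      have hdint : Integrable (fun x => ∑ i : Fin m, (f i.succ (x + t • v 0) - f i.succ x))
          (volume : Measure (Fin n → ℝ)) := by
        have : (fun x => ∑ i : Fin m, (f i.succ (x + t • v 0) - f i.succ x)) =
            (fun x => (∑ i, f i (x + t • v 0)) - (∑ i, f i x)) := funext heq
        rw [this]
        exact (hint.comp_add_right (t • v 0)).sub hint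
      have hdiff := ih (fun i x => f i.succ (x + t • v 0) - f i.succ x) (fun i => v i.succ)
        (fun i => hv i.succ)
        (fun i (x : Fin n → ℝ) (c : ℝ) => by
          show f i.succ ((x + c • v i.succ) + t • v 0) - f i.succ (x + c • v i.succ) =
            f i.succ (x + t • v 0) - f i.succ x
          rw [add_right_comm, hinvf i.succ (x + t • v 0) c, hinvf i.succ x c])
        hdint
      filter_upwards [hdiff] with x hx
      simp only [Pi.zero_apply] at hx
      have := heq x
      rw [hx] at this
      linarith [this]
    exact lemA (fun x => ∑ i, f i x) (v 0) (hv 0) hint hshift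

theorem stmt_10 (n m : ℕ) (hn : 2 ≤ n) (σ : ℝ → ℝ) (hσ : Measurable σ)
    (a : Fin m → ℝ) (w : Fin m → Fin n → ℝ) (b : Fin m → ℝ) :
    (∀ i : Fin m, ∃ v : Fin n → ℝ, v ≠ 0 ∧ ∀ (x : Fin n → ℝ) (c : ℝ),
      a i * σ (∑ j, w i j * (x + c • v) j + b i) = a i * σ (∑ j, w i j * x j + b i)) ∧
    (Integrable (fun x : Fin n → ℝ => ∑ i, a i * σ (∑ j, w i j * x j + b i))
        (volume : Measure (Fin n → ℝ)) →
      (fun x : Fin n → ℝ => ∑ i, a i * σ (∑ j, w i j * x j + b i))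
        =ᵐ[(volume : Measure (Fin n → ℝ))] 0) := by
  have hex : ∀ i : Fin m, ∃ v : Fin n → ℝ, v ≠ 0 ∧ ∀ (x : Fin n → ℝ) (c : ℝ),
      a i * σ (∑ j, w i j * (x + c • v) j + b i) = a i * σ (∑ j, w i j * x j + b i) := by
    intro i
    obtain ⟨v, hv0, horth⟩ := orth_exists hn (w i)
    exact ⟨v, hv0, fun x c => by rw [translate_sum (w i) v horth x c]⟩
  refine ⟨hex, ?_⟩
  intro hint
  choose V hV0 hVinv using hex
  exact lemB m (fun i x => a i * σ (∑ j, w i j * x j + b i)) V hV0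
    (fun i x c => hVinv i x c) hint
end

section
/- For n ≥ 2, let f : ℝⁿ → ℝ be Lebesgue integrable, and let g(x) = Σᵢ₌₁^m aᵢ σᵢ(wᵢᵀx + bᵢ) be a one-hidden-layer network with measurable activations σᵢ : ℝ → ℝ. Then either ∫ |f − g| = ∞ or ∫ |f − g| = ∫ |f|. -/
/-!
If `g = ∑ᵢ aᵢ σᵢ(wᵢ ⬝ x + bᵢ)` is integrable on `ℝⁿ` with `n ≥ 2`, choose `v ≠ 0` orthogonal to one
weight vector `wᵢ`. Then `x ↦ g (x + v) - g x` is again an integrable network, with one neuron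
fewer, hence vanishes a.e. by induction; so `g` is a.e. invariant under translation by `v`.
An integrable function invariant under a nonzero translation `v` vanishes a.e.: for a functional
`ℓ` with `ℓ v = 1`, the slabs `{k ≤ ℓ x < k + 1}`, `k ∈ ℤ`, all carry the same mass and together
carry a finite one. Hence either `f - g` is not integrable, or `g = 0` a.e. and `|f - g| = |f|` a.e.
-/

open MeasureTheory Set
open scoped ENNReal

section

variable {E : Type*} [NormedAddCommGroup E] [NormedSpace ℝ E] [MeasurableSpace E] [BorelSpace E]
  {μ : Measure E} [μ.IsAddRightInvariant]

theorem lintegral_eq_zero_of_ae_add_right_eq {g : E → ℝ≥0∞} (hg : ∫⁻ x, g x ∂μ ≠ ∞) {v : E}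
    (hv : v ≠ 0) (htr : ∀ᵐ x ∂μ, g (x + v) = g x) : ∫⁻ x, g x ∂μ = 0 := by
  obtain ⟨ℓ, hℓv⟩ := SeparatingDual.exists_eq_one (R := ℝ) hv
  set slab : ℤ → Set E := fun k => ℓ ⁻¹' Ico (k : ℝ) (k + 1)
  have hslab_meas (k : ℤ) : MeasurableSet (slab k) := ℓ.continuous.measurable measurableSet_Ico
  have hslab_disj : Pairwise (Function.onFun Disjoint slab) := fun k l hkl =>
    (pairwise_disjoint_Ico_intCast ℝ hkl).preimage ℓ
  have hslab_shift (k : ℤ) : (· + v) ⁻¹' slab (k + 1) = slab k := by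
    ext x
    simp only [slab, mem_preimage, mem_Ico, map_add, hℓv, Int.cast_add, Int.cast_one]
    constructor <;> rintro ⟨h₁, h₂⟩ <;> constructor <;> linarith
  have hmass_succ (k : ℤ) : ∫⁻ x in slab (k + 1), g x ∂μ = ∫⁻ x in slab k, g x ∂μ := by
    rw [← (measurePreserving_add_right μ v).setLIntegral_comp_preimage_emb
      (measurableEmbedding_addRight v) g, hslab_shift]
    exact lintegral_congr_ae (ae_restrict_of_ae htr)
  have hmass (k : ℤ) : ∫⁻ x in slab k, g x ∂μ = ∫⁻ x in slab 0, g x ∂μ := by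
    induction k using Int.induction_on with
    | zero => rfl
    | succ i ih => rw [hmass_succ, ih]
    | pred i ih => rw [← ih, ← hmass_succ, sub_add_cancel]
  have hsum : ∫⁻ x, g x ∂μ = ∑' _ : ℤ, ∫⁻ x in slab 0, g x ∂μ := by
    rw [← tsum_congr hmass, ← lintegral_iUnion hslab_meas hslab_disj, ← preimage_iUnion,
      iUnion_Ico_intCast, preimage_univ, Measure.restrict_univ]
  have hslab_zero : ∫⁻ x in slab 0, g x ∂μ = 0 := by
    by_contra h
    exact hg (hsum.trans (ENNReal.tsum_const_eq_top_of_ne_zero h))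
  rw [hsum, hslab_zero, tsum_zero]

theorem ae_eq_zero_of_integrable_of_ae_add_right_eq {F : Type*} [NormedAddCommGroup F] {h : E → F}
    (hh : Integrable h μ) {v : E} (hv : v ≠ 0) (htr : ∀ᵐ x ∂μ, h (x + v) = h x) :
    h =ᵐ[μ] 0 := by
  have hzero := lintegral_eq_zero_of_ae_add_right_eq hh.hasFiniteIntegral.ne hv
    (htr.mono fun x hx => by simp only [hx])
  filter_upwards [(lintegral_eq_zero_iff' hh.aestronglyMeasurable.enorm).1 hzero] with x hx
  simpa using hx

theorem ae_eq_zero_of_integrable_sum_comp_linearMap [FiniteDimensional ℝ E]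
    (hE : 2 ≤ Module.finrank ℝ E) {ι : Type*} (s : Finset ι)
    (ℓ : ι → E →ₗ[ℝ] ℝ) (φ : ι → ℝ → ℝ) (hint : Integrable (fun x => ∑ i ∈ s, φ i (ℓ i x)) μ) :
    (fun x => ∑ i ∈ s, φ i (ℓ i x)) =ᵐ[μ] 0 := by
  classical
  induction s using Finset.induction_on generalizing φ with
  | empty => exact ae_of_all _ fun x => Finset.sum_empty
  | insert i s hi ih =>
    obtain ⟨v, hv_ker, hv⟩ := (LinearMap.ker (ℓ i)).ne_bot_iff.mp
      (LinearMap.ker_ne_bot_of_finrank_lt (by rw [Module.finrank_self]; omega))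
    set g := fun x => ∑ j ∈ insert i s, φ j (ℓ j x)
    set ψ : ι → ℝ → ℝ := fun j t => φ j (t + ℓ j v) - φ j t
    have hdiff (x : E) : g (x + v) - g x = ∑ j ∈ s, ψ j (ℓ j x) := by
      rw [LinearMap.mem_ker] at hv_ker
      simp only [g, ψ, Finset.sum_insert hi, map_add, hv_ker, add_zero, Finset.sum_sub_distrib]
      ring
    have hψ_zero := ih ψ (((hint.comp_add_right v).sub hint).congr (ae_of_all _ hdiff))
    refine ae_eq_zero_of_integrable_of_ae_add_right_eq hint hv ?_
    filter_upwards [hψ_zero] with x hx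
    exact sub_eq_zero.mp ((hdiff x).trans hx)

end

theorem stmt_11 (n m : ℕ) (hn : 2 ≤ n) (f : (Fin n → ℝ) → ℝ)
    (hf : Integrable f (volume : Measure (Fin n → ℝ)))
    (σ : Fin m → ℝ → ℝ) (hσ : ∀ i, Measurable (σ i))
    (a : Fin m → ℝ) (w : Fin m → Fin n → ℝ) (b : Fin m → ℝ) :
    (∫⁻ x : Fin n → ℝ, ENNReal.ofReal |f x - ∑ i, a i * σ i (∑ j, w i j * x j + b i)| = ⊤) ∨
    (∫⁻ x : Fin n → ℝ, ENNReal.ofReal |f x - ∑ i, a i * σ i (∑ j, w i j * x j + b i)|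
      = ∫⁻ x : Fin n → ℝ, ENNReal.ofReal |f x|) := by
  set g : (Fin n → ℝ) → ℝ := fun x => ∑ i, a i * σ i (∑ j, w i j * x j + b i)
  refine or_iff_not_imp_left.2 fun hfin => lintegral_congr_ae ?_
  have hg_meas : Measurable g := by fun_prop
  have hfg_int : Integrable (fun x => f x - g x) := by
    refine ⟨hf.aestronglyMeasurable.sub hg_meas.aestronglyMeasurable, ?_⟩
    simpa [HasFiniteIntegral, Real.enorm_eq_ofReal_abs, lt_top_iff_ne_top] using hfin
  have hg_int : Integrable g := (hf.sub hfg_int).congr (ae_of_all _ fun x => sub_sub_cancel _ _)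
  obtain ⟨ℓ, hℓ⟩ : ∃ ℓ : Fin m → (Fin n → ℝ) →ₗ[ℝ] ℝ, ∀ i x, ℓ i x = ∑ j, w i j * x j :=
    ⟨fun i => ∑ j, w i j • LinearMap.proj j, fun i x => by simp⟩
  have hg_ridge : g = fun x => ∑ i ∈ Finset.univ, (fun i t => a i * σ i (t + b i)) i (ℓ i x) := by
    simp only [g, hℓ]
  have hg_zero : g =ᵐ[volume] 0 := by
    rw [hg_ridge] at hg_int ⊢
    exact ae_eq_zero_of_integrable_sum_comp_linearMap (μ := volume) (by simpa using hn)
      Finset.univ ℓ (fun i t => a i * σ i (t + b i)) hg_int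
  filter_upwards [hg_zero] with x hx
  have hx' : ∑ i, a i * σ i (∑ j, w i j * x j + b i) = 0 := hx
  rw [hx', sub_zero]
end

section
/- Let f_1, ..., f_m be continuous periodic functions on ℝⁿ, each f_i satisfying f_i(x + v_i) = f_i(x) for some v_i ≠ 0, and suppose f₁ + ⋯ + f_m is integrable. If every integrable sum of m−1 continuous periodic functions on ℝⁿ vanishes identically, then (f₁+⋯+f_m)(x + v_m) = (f₁+⋯+f_m)(x) for all x. -/
open MeasureTheory

theorem stmt_14 (n m : ℕ) (f : Fin (m + 1) → (Fin n → ℝ) → ℝ) (v : Fin (m + 1) → Fin n → ℝ)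
    (hcont : ∀ i, Continuous (f i)) (hv : ∀ i, v i ≠ 0)
    (hper : ∀ i x, f i (x + v i) = f i x)
    (hint : Integrable (fun x => ∑ i, f i x) (volume : Measure (Fin n → ℝ)))
    (IH : ∀ (g : Fin m → (Fin n → ℝ) → ℝ) (u : Fin m → Fin n → ℝ),
      (∀ i, Continuous (g i)) → (∀ i, u i ≠ 0) → (∀ i x, g i (x + u i) = g i x) →
      Integrable (fun x => ∑ i, g i x) (volume : Measure (Fin n → ℝ)) →
      ∀ x, ∑ i, g i x = 0) :
    ∀ x, (∑ i, f i (x + v (Fin.last m))) = ∑ i, f i x := by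
  set c := v (Fin.last m) with hc
  set g : Fin m → (Fin n → ℝ) → ℝ := fun i x => f i.castSucc (x + c) - f i.castSucc x with hg
  have key : ∀ x, (∑ i, f i (x + c)) - (∑ i, f i x) = ∑ i, g i x := by
    intro x
    rw [Fin.sum_univ_castSucc (f := fun i => f i (x + c)),
        Fin.sum_univ_castSucc (f := fun i => f i x), hper (Fin.last m) x]
    simp [g, Finset.sum_sub_distrib]
  have hzero : ∀ x, ∑ i, g i x = 0 := by
    apply IH g (fun i => v i.castSucc)
    · intro i
      exact ((hcont _).comp (continuous_id.add continuous_const)).sub (hcont _)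
    · intro i; exact hv _
    · intro i x
      simp only [g]
      rw [show x + v i.castSucc + c = (x + c) + v i.castSucc by ring,
        hper i.castSucc (x + c), hper i.castSucc x]
    · have h1 : Integrable (fun x => ∑ i, f i (x + c)) (volume : Measure (Fin n → ℝ)) :=
        hint.comp_add_right c
      have := h1.sub hint
      apply this.congr
      filter_upwards with x
      simp only [Pi.sub_apply]
      exact key x
  intro x
  have := key x
  rw [hzero x] at this
  linarith
end

section
/- For n ≥ 3, the 'pyramid' function g(x) = max(0, 1 − ‖x‖_∞) on ℝⁿ cannot be written as a finite linear combination Σᵢ aᵢ max(wᵢᵀx + bᵢ, uᵢᵀx + cᵢ) of hinges of two affine functions. -/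
open MeasureTheory

section Aux

variable {E : Type*} [NormedAddCommGroup E]

/-- The difference operator `f ↦ f(· + v) - f`. -/
def Dop (v : E) (f : E → ℝ) : E → ℝ := fun x => f (x + v) - f x

/-- Iterated difference operators. -/
def Dops : List E → (E → ℝ) → (E → ℝ)
  | [], f => f
  | v :: l, f => Dop v (Dops l f)

lemma Dops_sum {ι : Type*} (s : Finset ι) (l : List E) (h : ι → E → ℝ) :
    Dops l (fun x => ∑ i ∈ s, h i x) = fun x => ∑ i ∈ s, Dops l (h i) x := by
  induction l with
  | nil => rfl
  | cons v l ih =>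
      simp only [Dops, ih]
      funext x
      simp [Dop, Finset.sum_sub_distrib]

lemma Dops_invariant (v : E) (l : List E) (f : E → ℝ) (hf : ∀ x, f (x + v) = f x) :
    ∀ x, Dops l f (x + v) = Dops l f x := by
  induction l with
  | nil => exact hf
  | cons w l ih =>
      intro x
      simp only [Dops, Dop]
      rw [add_right_comm, ih (x + w), ih x]

lemma Dops_eq_zero (v : E) (l : List E) (hv : v ∈ l) (f : E → ℝ)
    (hf : ∀ x, f (x + v) = f x) : Dops l f = fun _ => 0 := by
  induction l with
  | nil => cases hv
  | cons w l ih =>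
      rcases List.mem_cons.mp hv with h | h
      · subst h
        funext x
        simp only [Dops, Dop]
        rw [Dops_invariant v l f hf x, sub_self]
      · rw [Dops, ih h]
        funext x
        simp [Dop]

lemma Dops_eval (l : List E) (g : E → ℝ) (x : E)
    (hg : ∀ l' : List E, List.Sublist l' l → l' ≠ [] → g (x + l'.sum) = 0) :
    Dops l g x = (-1) ^ l.length * g x := by
  induction l generalizing x with
  | nil => simp [Dops]
  | cons v l ih =>
      have h1 : Dops l g x = (-1) ^ l.length * g x :=
        ih x (fun l' hl' hne => hg l' (hl'.cons v) hne)
      have h2 : Dops l g (x + v) = 0 := by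
        have hgv : g (x + v) = 0 := by
          have := hg [v] ((List.nil_sublist l).cons₂ v) (by simp)
          simpa using this
        have := ih (x + v) (fun l' hl' hne => by
          have := hg (v :: l') (hl'.cons₂ v) (by simp)
          simpa [add_assoc] using this)
        rw [this, hgv, mul_zero]
      simp only [Dops, Dop, h1, h2, List.length_cons, pow_succ]
      ring

lemma sum_bound : ∀ (s : List ℕ) (h : ℕ), (∀ i ∈ s, i < h) → s.Pairwise (· > ·) →
    (s.map (fun i => (4 : ℝ) * 3 ^ i)).sum ≤ 2 * 3 ^ h - 2 := by
  intro s
  induction s with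
  | nil =>
      intro h _ _
      have : (1 : ℝ) ≤ 3 ^ h := one_le_pow₀ (by norm_num)
      simp only [List.map_nil, List.sum_nil]
      linarith
  | cons i s ih =>
      intro h hlt hp
      rw [List.pairwise_cons] at hp
      have h1 : (s.map (fun i => (4 : ℝ) * 3 ^ i)).sum ≤ 2 * 3 ^ i - 2 :=
        ih i (fun j hj => hp.1 j hj) hp.2
      have h2 : (3 : ℝ) ^ (i + 1) ≤ 3 ^ h := by
        apply pow_le_pow_right₀ (by norm_num)
        exact hlt i (by simp)
      simp only [List.map_cons, List.sum_cons]
      rw [pow_succ] at h2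
      linarith

lemma list_norm_sum_le (l : List E) : ‖l.sum‖ ≤ (l.map norm).sum := by
  induction l with
  | nil => simp
  | cons a l ih =>
      simp only [List.sum_cons, List.map_cons]
      exact le_trans (norm_add_le _ _) (by linarith)

lemma norm_sum_ge (e : ℕ → E) (s : List ℕ) (hs : s.Pairwise (· > ·)) (hne : s ≠ [])
    (he : ∀ i ∈ s, ‖e i‖ = 4 * 3 ^ i) : (1 : ℝ) ≤ ‖(s.map e).sum‖ := by
  match s with
  | k :: s =>
    rw [List.pairwise_cons] at hs
    have hmaps : ((s.map e).map norm).sum = (s.map (fun i => (4 : ℝ) * 3 ^ i)).sum := by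
      rw [List.map_map]
      congr 1
      apply List.map_congr_left
      intro i hi
      exact he i (List.mem_cons_of_mem _ hi)
    have htail : ‖(s.map e).sum‖ ≤ 2 * 3 ^ k - 2 := by
      calc ‖(s.map e).sum‖ ≤ ((s.map e).map norm).sum := list_norm_sum_le _
        _ = (s.map (fun i => (4 : ℝ) * 3 ^ i)).sum := hmaps
        _ ≤ 2 * 3 ^ k - 2 := sum_bound s k (fun j hj => hs.1 j hj) hs.2
    have hk : ‖e k‖ = 4 * 3 ^ k := he k List.mem_cons_self
    have hpos : (1 : ℝ) ≤ 3 ^ k := one_le_pow₀ (by norm_num)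
    have hge : ‖e k‖ - ‖(s.map e).sum‖ ≤ ‖e k + (s.map e).sum‖ := by
      have h' : e k + (s.map e).sum - (s.map e).sum = e k := by abel
      have := norm_sub_le (e k + (s.map e).sum) ((s.map e).sum)
      rw [h'] at this
      linarith
    simp only [List.map_cons, List.sum_cons]
    linarith

lemma exists_kernel_vec (n : ℕ) (hn : 3 ≤ n) (w u : Fin n → ℝ) :
    ∃ v : Fin n → ℝ, v ≠ 0 ∧ ∑ j, w j * v j = 0 ∧ ∑ j, u j * v j = 0 := by
  let f : (Fin n → ℝ) →ₗ[ℝ] ℝ × ℝ :=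
    { toFun := fun x => (∑ j, w j * x j, ∑ j, u j * x j)
      map_add' := by
        intro x y
        simp [mul_add, Finset.sum_add_distrib, Prod.ext_iff]
      map_smul' := by
        intro r x
        simp [Finset.mul_sum, mul_left_comm, Prod.ext_iff, Prod.smul_def, smul_eq_mul] }
  have hker : LinearMap.ker f ≠ ⊥ := by
    intro hbot
    have hinj : Function.Injective f := LinearMap.ker_eq_bot.mp hbot
    have := LinearMap.finrank_le_finrank_of_injective hinj
    simp [Module.finrank_pi] at this
    omega
  obtain ⟨v, hv, hv0⟩ := Submodule.ne_bot_iff _ |>.mp hker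
  refine ⟨v, hv0, ?_, ?_⟩
  · exact congrArg Prod.fst hv
  · exact congrArg Prod.snd hv

end Aux

theorem stmt_15 (n : ℕ) (hn : 3 ≤ n) :
    ¬ ∃ (m : ℕ) (a : Fin m → ℝ) (w u : Fin m → Fin n → ℝ) (b c : Fin m → ℝ),
      ∀ x : Fin n → ℝ,
        max 0 (1 - ‖x‖) = ∑ i, a i * max (∑ j, w i j * x j + b i) (∑ j, u i j * x j + c i) := by
  rintro ⟨m, a, w, u, b, c, hrep⟩
  set g : (Fin n → ℝ) → ℝ := fun x => max 0 (1 - ‖x‖) with hg_def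
  -- choose kernel directions
  choose v hv0 hw hu using fun i : Fin m => exists_kernel_vec n hn (w i) (u i)
  -- scaled directions, indexed by ℕ
  set e : ℕ → (Fin n → ℝ) := fun i =>
    if h : i < m then ((4 * 3 ^ i) / ‖v ⟨i, h⟩‖) • v ⟨i, h⟩ else 0 with he_def
  have hnorm : ∀ i, i < m → ‖e i‖ = 4 * 3 ^ i := by
    intro i hi
    have hvne : ‖v ⟨i, hi⟩‖ ≠ 0 := norm_ne_zero_iff.mpr (hv0 ⟨i, hi⟩)
    simp only [he_def, dif_pos hi, norm_smul, Real.norm_eq_abs]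
    rw [abs_of_nonneg (by positivity), div_mul_cancel₀ _ hvne]
  set L : List (Fin n → ℝ) := ((List.range m).reverse).map e with hL_def
  -- each hinge term, as a function
  set h : Fin m → (Fin n → ℝ) → ℝ := fun i x =>
    a i * max (∑ j, w i j * x j + b i) (∑ j, u i j * x j + c i) with hh_def
  -- invariance of each term
  have hinv : ∀ i : Fin m, ∀ x, h i (x + e i.val) = h i x := by
    intro i x
    have hei : e i.val = ((4 * 3 ^ i.val) / ‖v i‖) • v i := by
      simp only [he_def, dif_pos i.isLt]
    have key : ∀ z : Fin n → ℝ, (∑ j, z j * v i j = 0) →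
        ∑ j, z j * (x + e i.val) j = ∑ j, z j * x j := by
      intro z hz
      simp only [hei, Pi.add_apply, Pi.smul_apply, smul_eq_mul, mul_add,
        Finset.sum_add_distrib]
      have : ∑ j, z j * ((4 * 3 ^ i.val) / ‖v i‖ * v i j)
          = (4 * 3 ^ i.val) / ‖v i‖ * ∑ j, z j * v i j := by
        rw [Finset.mul_sum]
        congr 1
        funext j
        ring
      rw [this, hz, mul_zero, add_zero]
    simp only [hh_def]
    rw [key (w i) (hw i), key (u i) (hu i)]
  -- membership of each direction in L
  have hmem : ∀ i : Fin m, e i.val ∈ L := by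
    intro i
    apply List.mem_map_of_mem
    rw [List.mem_reverse, List.mem_range]
    exact i.isLt
  -- the RHS function is annihilated
  have hF : Dops L (fun x => ∑ i, h i x) = fun _ => 0 := by
    rw [Dops_sum]
    funext x
    apply Finset.sum_eq_zero
    intro i _
    rw [Dops_eq_zero (e i.val) L (hmem i) (h i) (hinv i)]
  -- g vanishes at nonempty sublist sums
  have hvanish : ∀ l' : List (Fin n → ℝ), List.Sublist l' L → l' ≠ [] → g (0 + l'.sum) = 0 := by
    intro l' hl' hne
    obtain ⟨s, hs, rfl⟩ := List.sublist_map_iff.mp hl'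
    have hpair : s.Pairwise (· > ·) := by
      have : ((List.range m).reverse).Pairwise (· > ·) := by
        rw [List.pairwise_reverse]
        exact List.pairwise_lt_range
      exact this.sublist hs
    have hsne : s ≠ [] := by
      intro hnil
      apply hne
      rw [hnil, List.map_nil]
    have hmemlt : ∀ i ∈ s, i < m := by
      intro i hi
      have := hs.mem hi
      rw [List.mem_reverse, List.mem_range] at this
      exact this
    have h1 : (1 : ℝ) ≤ ‖(s.map e).sum‖ :=
      norm_sum_ge e s hpair hsne (fun i hi => hnorm i (hmemlt i hi))
    simp only [hg_def, zero_add]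
    apply max_eq_left
    linarith
  have heval : Dops L g 0 = (-1) ^ L.length * g 0 := Dops_eval L g 0 hvanish
  have hgF : g = fun x => ∑ i, h i x := by
    funext x
    exact hrep x
  have hzero : Dops L g 0 = 0 := by
    rw [hgF, hF]
  have hg0 : g 0 = 1 := by
    simp [hg_def]
  rw [hzero, hg0, mul_one] at heval
  exact pow_ne_zero L.length (by norm_num : (-1 : ℝ) ≠ 0) heval.symm
end
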